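/- arXiv:1602.03348 — 2 statements merged into one kernel-verified Lean document; each statement's English description precedes it below -/
import Mathlib

section
/- Let S be a nonempty finite set, m a positive natural number, and C_1, …, C_m subsets of S whose union is S. Let γ, η be real numbers with 0 ≤ γ < 1 and η ≥ 0, let f : S → ℝ, and let W_0, W_1, …, W_m : S → ℝ be functions such that for every j ∈ {1, …, m}: (i) for every s ∈ C_j, |f(s) − W_j(s)| ≤ γ · max_{s'∈S} |f(s') − W_{j−1}(s')| + η, and (ii) for every s ∈ S, |f(s) − W_j(s)| ≤ |f(s) − W_{j−1}(s)| + η. Then for every s ∈ S, |f(s) − W_m(s)| ≤ γ · max_{s'∈S} |f(s') − W_0(s')| + m·η. -/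
open Finset in
/-- Abstract form of Lemma 2: one full update sweep over the `m` partition
classes `C 0, …, C (m-1)` (with `W (j+1)` the function after the `(j+1)`-th
update) yields a `γ`-contraction of the sup-norm error up to additive error
`m·η`. -/
theorem ihomp_sweep_contraction {S : Type*} [Fintype S] [Nonempty S]
    (m : ℕ) (hm : 0 < m) (C : Fin m → Set S) (hC : (⋃ j, C j) = Set.univ)
    (γ η : ℝ) (hγ0 : 0 ≤ γ) (hγ1 : γ < 1) (hη : 0 ≤ η)
    (f : S → ℝ) (W : ℕ → S → ℝ)
    (hcontract : ∀ j : Fin m, ∀ s ∈ C j,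
      |f s - W (j.val + 1) s| ≤
        γ * (univ.sup' univ_nonempty fun s' => |f s' - W j.val s'|) + η)
    (hdrift : ∀ j : Fin m, ∀ s : S,
      |f s - W (j.val + 1) s| ≤ |f s - W j.val s| + η) :
    ∀ s : S, |f s - W m s| ≤
      γ * (univ.sup' univ_nonempty fun s' => |f s' - W 0 s'|) + (m : ℝ) * η := by
  set E : ℕ → ℝ := fun k => univ.sup' univ_nonempty fun s' => |f s' - W k s'| with hE
  -- E is monotone up to drift
  have hEstep : ∀ k : ℕ, k < m → E (k + 1) ≤ E k + η := by
    intro k hk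
    apply Finset.sup'_le
    intro s _
    calc |f s - W (k + 1) s| ≤ |f s - W k s| + η := hdrift ⟨k, hk⟩ s
      _ ≤ E k + η :=
        add_le_add_left (Finset.le_sup' (fun s' => |f s' - W k s'|) (mem_univ s)) η
  have hEk : ∀ k : ℕ, k ≤ m → E k ≤ E 0 + (k : ℝ) * η := by
    intro k hk
    induction k with
    | zero => simp
    | succ n ih =>
      have h1 : n < m := hk
      calc E (n + 1) ≤ E n + η := hEstep n h1
        _ ≤ E 0 + (n : ℝ) * η + η := by linarith [ih (le_of_lt h1)]
        _ = E 0 + ((n : ℕ) + 1 : ℝ) * η := by ring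
        _ = E 0 + ((n + 1 : ℕ) : ℝ) * η := by push_cast; ring
  -- pointwise drift over several steps
  have hmulti : ∀ s : S, ∀ a b : ℕ, a ≤ b → b ≤ m →
      |f s - W b s| ≤ |f s - W a s| + ((b : ℝ) - a) * η := by
    intro s a b hab hbm
    induction b, hab using Nat.le_induction with
    | base => simp
    | succ n hn ih =>
      have h1 : n < m := hbm
      calc |f s - W (n + 1) s| ≤ |f s - W n s| + η := hdrift ⟨n, h1⟩ s
        _ ≤ |f s - W a s| + ((n : ℝ) - a) * η + η := by
            linarith [ih (le_of_lt h1)]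
        _ = |f s - W a s| + (((n + 1 : ℕ) : ℝ) - a) * η := by push_cast; ring
  intro s
  have hs : s ∈ ⋃ j, C j := by rw [hC]; trivial
  obtain ⟨j, hj⟩ := Set.mem_iUnion.mp hs
  have h1 : |f s - W (j.val + 1) s| ≤ γ * E j.val + η := hcontract j s hj
  have h2 := hmulti s (j.val + 1) m j.isLt (le_refl m)
  push_cast at h2
  have h3 : E j.val ≤ E 0 + (j.val : ℝ) * η := hEk j.val (le_of_lt j.isLt)
  have h4 : γ * E j.val ≤ γ * (E 0 + (j.val : ℝ) * η) := by gcongr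
  have h5 : γ * ((j.val : ℝ) * η) ≤ (j.val : ℝ) * η := by
    have : (0:ℝ) ≤ (j.val : ℝ) * η := by positivity
    nlinarith
  have hjm : ((j.val : ℝ) + 1) ≤ (m : ℝ) := by exact_mod_cast j.isLt
  nlinarith [h1, h2, h4]
end

section
/- Let S and A be nonempty finite types, let γ be a real number with 0 ≤ γ < 1, and let P : S → A → S → ℝ satisfy P s a s' ≥ 0 for all s, a, s' and ∑_{s'∈S} P s a s' = 1 for all s, a. Let r : S → A → ℝ and define the optimal Bellman operator T by (T f)(s) = max_{a∈A} ( r s a + γ · ∑_{s'∈S} P s a s' · f s' ). Then there exists a unique function V* : S → ℝ with T V* = V*. -/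
/-!
The optimal Bellman operator is a `γ`-contraction of `S → ℝ` in the sup metric: a maximum over a
finite set is `1`-Lipschitz, and averaging against a probability vector is `1`-Lipschitz. Since
`S → ℝ` is complete, Banach's fixed point theorem gives existence and uniqueness of `V*`.
-/

open Finset

theorem Finset.sup'_le_sup'_add_dist {ι : Type*} [Fintype ι] (s : Finset ι) (hs : s.Nonempty)
    (f g : ι → ℝ) : s.sup' hs f ≤ s.sup' hs g + dist f g :=
  sup'_le _ _ fun i hi =>
    calc f i = g i + (f i - g i) := by ring
      _ ≤ g i + dist f g := by
          gcongr
          exact (le_abs_self _).trans ((Real.dist_eq _ _).symm.trans_le (dist_le_pi_dist f g i))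
      _ ≤ s.sup' hs g + dist f g := by gcongr; exact le_sup' g hi

theorem Finset.dist_sup'_sup'_le {ι : Type*} [Fintype ι] (s : Finset ι) (hs : s.Nonempty)
    (f g : ι → ℝ) : dist (s.sup' hs f) (s.sup' hs g) ≤ dist f g := by
  rw [Real.dist_eq, abs_sub_le_iff, sub_le_iff_le_add', sub_le_iff_le_add']
  exact ⟨s.sup'_le_sup'_add_dist hs f g, dist_comm f g ▸ s.sup'_le_sup'_add_dist hs g f⟩

theorem dist_sum_mul_sum_mul_le {ι : Type*} [Fintype ι] (p : ι → ℝ) (hp0 : ∀ i, 0 ≤ p i)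
    (hp1 : ∑ i, p i = 1) (f g : ι → ℝ) :
    dist (∑ i, p i * f i) (∑ i, p i * g i) ≤ dist f g :=
  calc dist (∑ i, p i * f i) (∑ i, p i * g i) = |∑ i, p i * (f i - g i)| := by
        simp only [Real.dist_eq, mul_sub, sum_sub_distrib]
    _ ≤ ∑ i, |p i * (f i - g i)| := abs_sum_le_sum_abs _ _
    _ ≤ ∑ i, p i * dist f g := by
        gcongr with i
        rw [abs_mul, abs_of_nonneg (hp0 i), ← Real.dist_eq]
        exact mul_le_mul_of_nonneg_left (dist_le_pi_dist f g i) (hp0 i)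
    _ = dist f g := by rw [← sum_mul, hp1, one_mul]

section Bellman

variable {S A : Type*} [Fintype S] [Fintype A] [Nonempty A]

noncomputable def bellmanOperator (γ : ℝ) (P : S → A → S → ℝ) (r : S → A → ℝ) (f : S → ℝ) :
    S → ℝ :=
  fun s => univ.sup' univ_nonempty fun a => r s a + γ * ∑ s', P s a s' * f s'

theorem dist_bellmanOperator_le {γ : ℝ} (hγ0 : 0 ≤ γ) {P : S → A → S → ℝ}
    (hP0 : ∀ s a s', 0 ≤ P s a s') (hP1 : ∀ s a, ∑ s', P s a s' = 1) (r : S → A → ℝ)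
    (f g : S → ℝ) :
    dist (bellmanOperator γ P r f) (bellmanOperator γ P r g) ≤ γ * dist f g := by
  refine (dist_pi_le_iff (by positivity)).2 fun s => ?_
  refine (univ.dist_sup'_sup'_le univ_nonempty _ _).trans <|
    (dist_pi_le_iff (by positivity)).2 fun a => ?_
  rw [dist_add_left, Real.dist_eq, ← mul_sub, abs_mul, abs_of_nonneg hγ0, ← Real.dist_eq]
  exact mul_le_mul_of_nonneg_left (dist_sum_mul_sum_mul_le _ (hP0 s a) (hP1 s a) f g) hγ0

theorem contractingWith_bellmanOperator {γ : ℝ} (hγ0 : 0 ≤ γ) (hγ1 : γ < 1)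
    {P : S → A → S → ℝ} (hP0 : ∀ s a s', 0 ≤ P s a s') (hP1 : ∀ s a, ∑ s', P s a s' = 1)
    (r : S → A → ℝ) : ContractingWith ⟨γ, hγ0⟩ (bellmanOperator γ P r) :=
  ⟨hγ1, LipschitzWith.of_dist_le_mul (dist_bellmanOperator_le hγ0 hP0 hP1 r)⟩

end Bellman

open Finset in
theorem bellman_fixed_point_exists_unique_general {S A : Type*} [Fintype S] [Fintype A]
    [Nonempty A]
    (γ : ℝ) (hγ0 : 0 ≤ γ) (hγ1 : γ < 1)
    (P : S → A → S → ℝ) (hP0 : ∀ s a s', 0 ≤ P s a s')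
    (hP1 : ∀ s a, ∑ s', P s a s' = 1)
    (r : S → A → ℝ)
    (T : (S → ℝ) → S → ℝ)
    (hT : ∀ f s, T f s =
      univ.sup' univ_nonempty fun a => r s a + γ * ∑ s', P s a s' * f s') :
    ∃! Vstar : S → ℝ, T Vstar = Vstar := by
  obtain rfl : T = bellmanOperator γ P r := funext fun f => funext (hT f)
  have hT := contractingWith_bellmanOperator hγ0 hγ1 hP0 hP1 r
  exact ⟨_, hT.fixedPoint_isFixedPt, fun V hV => hT.fixedPoint_unique hV⟩

open Finset in
/-- The optimal Bellman operator of a finite MDP has a unique fixed point,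
the optimal value function `V*`. -/
theorem bellman_fixed_point_exists_unique {S A : Type*} [Fintype S] [Fintype A]
    [Nonempty S] [Nonempty A]
    (γ : ℝ) (hγ0 : 0 ≤ γ) (hγ1 : γ < 1)
    (P : S → A → S → ℝ) (hP0 : ∀ s a s', 0 ≤ P s a s')
    (hP1 : ∀ s a, ∑ s', P s a s' = 1)
    (r : S → A → ℝ)
    (T : (S → ℝ) → S → ℝ)
    (hT : ∀ f s, T f s =
      univ.sup' univ_nonempty fun a => r s a + γ * ∑ s', P s a s' * f s') :
    ∃! Vstar : S → ℝ, T Vstar = Vstar :=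
  bellman_fixed_point_exists_unique_general γ hγ0 hγ1 P hP0 hP1 r T hT
end
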